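/- Let f : ℝ → ℂ be a continuous π-periodic function with Σ_{n∈ℤ} (1+|n|)·|a_n(f)| < ∞. Then there exists a continuous π-periodic function g : ℝ → ℂ with Σ_{n∈ℤ} |a_n(g)| < ∞ and a_n(g) = −(1+2in)·a_n(f) for every n ∈ ℤ. -/

import Mathlib

noncomputable section

open Complex MeasureTheory intervalIntegral

lemma key_integral (k : ℤ) :
    (∫ θ in (0:ℝ)..Real.pi, Complex.exp (2 * (k : ℂ) * Complex.I * θ)) =
      if k = 0 then (Real.pi : ℂ) else 0 := by
  rcases eq_or_ne k 0 with hk | hk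
  · simp [hk]
  · have hc : (2 * (k : ℂ) * Complex.I) ≠ 0 := by
      simp [Complex.I_ne_zero, hk]
    rw [if_neg hk, integral_exp_mul_complex hc]
    have h1 : Complex.exp (2 * (k : ℂ) * Complex.I * (Real.pi : ℂ)) = 1 := by
      have := Complex.exp_int_mul_two_pi_mul_I k
      rw [← this]; ring_nf
    simp [h1]

/-- The `n`-th Fourier coefficient `a_n(f) = (1/π) ∫₀^π f(θ) e^{-2inθ} dθ` of a π-periodic
function `f : ℝ → ℂ`. -/
def fc (f : ℝ → ℂ) (n : ℤ) : ℂ :=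
  (Real.pi : ℂ)⁻¹ * ∫ θ in (0:ℝ)..Real.pi, f θ * Complex.exp (-(2 * (n : ℂ) * Complex.I * (θ : ℂ)))

/-- Surjectivity onto `W_{λ,s}`: given `f` with `Σ (1+|n|)|a_n(f)| < ∞`, there is a continuous
π-periodic `g` with absolutely convergent Fourier series and `a_n(g) = -(1+2in) a_n(f)`. -/
theorem exists_g (f : ℝ → ℂ) (hc : Continuous f) (hp : Function.Periodic f Real.pi)
    (hsum : Summable fun n : ℤ => (1 + |(n : ℝ)|) * ‖fc f n‖) :
    ∃ g : ℝ → ℂ, Continuous g ∧ Function.Periodic g Real.pi ∧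
      (Summable fun n : ℤ => ‖fc g n‖) ∧
      ∀ n : ℤ, fc g n = -(1 + 2 * (n : ℂ) * Complex.I) * fc f n := by
  set c : ℤ → ℂ := fun n => -(1 + 2 * (n : ℂ) * Complex.I) * fc f n with hcdef
  have hcsum : Summable fun n : ℤ => ‖c n‖ := by
    apply Summable.of_nonneg_of_le (fun n => norm_nonneg _)
      (fun n => ?_) (hsum.mul_left 2)
    have h1 : ‖c n‖ = ‖(1 + 2 * (n : ℂ) * Complex.I)‖ * ‖fc f n‖ := by
      rw [hcdef]; simp only []; rw [neg_mul, norm_neg, norm_mul]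
    rw [h1]
    have h2 : ‖(1 + 2 * (n : ℂ) * Complex.I)‖ ≤ 2 * (1 + |(n : ℝ)|) := by
      refine le_trans (Complex.norm_le_abs_re_add_abs_im _) ?_
      simp only [Complex.add_re, Complex.one_re, Complex.add_im, Complex.one_im]
      have : (2 * (n : ℂ) * Complex.I).re = 0 := by simp
      have h3 : (2 * (n : ℂ) * Complex.I).im = 2 * (n : ℝ) := by simp
      rw [this, h3]
      simp only [add_zero, zero_add, abs_one, abs_mul, _root_.abs_two]
      nlinarith [abs_nonneg (n : ℝ)]
    calc ‖(1 + 2 * (n : ℂ) * Complex.I)‖ * ‖fc f n‖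
        ≤ (2 * (1 + |(n : ℝ)|)) * ‖fc f n‖ := by
          exact mul_le_mul_of_nonneg_right h2 (norm_nonneg _)
      _ = 2 * ((1 + |(n : ℝ)|) * ‖fc f n‖) := by ring
  set g : ℝ → ℂ := fun θ => ∑' m : ℤ, c m * Complex.exp (2 * (m : ℂ) * Complex.I * θ) with hgdef
  have hnorm : ∀ (m : ℤ) (θ : ℝ), ‖c m * Complex.exp (2 * (m : ℂ) * Complex.I * θ)‖ = ‖c m‖ := by
    intro m θ
    rw [norm_mul, Complex.norm_exp]
    have : (2 * (m : ℂ) * Complex.I * θ).re = 0 := by simp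
    rw [this, Real.exp_zero, mul_one]
  have hgcont : Continuous g := by
    apply continuous_tsum (u := fun m => ‖c m‖)
    · exact fun m => Continuous.mul continuous_const
        (Complex.continuous_exp.comp (by continuity))
    · exact hcsum
    · intro m θ; exact (hnorm m θ).le
  have hgper : Function.Periodic g Real.pi := by
    intro θ
    simp only [hgdef]
    congr 1; funext m
    congr 1
    push_cast
    rw [mul_add, Complex.exp_add]
    have h1 : Complex.exp (2 * (m : ℂ) * Complex.I * (Real.pi : ℂ)) = 1 := by
      have := Complex.exp_int_mul_two_pi_mul_I m
      rw [← this]; ring_nf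
    rw [h1, mul_one]
  -- compute fc g n
  have hfc : ∀ n : ℤ, fc g n = c n := by
    intro n
    set F : ℤ → C(ℝ, ℂ) := fun m =>
      ⟨fun θ => c m * Complex.exp (2 * (m : ℂ) * Complex.I * θ) *
        Complex.exp (-(2 * (n : ℂ) * Complex.I * θ)), by
        apply Continuous.mul
        · exact Continuous.mul continuous_const (Complex.continuous_exp.comp (by continuity))
        · exact Complex.continuous_exp.comp (by continuity)⟩ with hFdef
    have hFnorm : ∀ (m : ℤ) (θ : ℝ), ‖F m θ‖ = ‖c m‖ := by
      intro m θ
      simp only [hFdef, ContinuousMap.coe_mk]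
      rw [norm_mul, hnorm, Complex.norm_exp]
      have : (-(2 * (n : ℂ) * Complex.I * θ)).re = 0 := by simp
      rw [this, Real.exp_zero, mul_one]
    have hFsum : Summable fun m : ℤ =>
        ‖(F m).restrict (⟨Set.uIcc (0:ℝ) Real.pi, isCompact_uIcc⟩ : TopologicalSpace.Compacts ℝ)‖ := by
      apply Summable.of_nonneg_of_le (fun m => norm_nonneg _) (fun m => ?_) hcsum
      apply ContinuousMap.norm_le _ (norm_nonneg _) |>.mpr
      intro θ
      simp only [ContinuousMap.restrict_apply]
      exact (hFnorm m θ).le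
    have hHS : HasSum (fun m : ℤ => ∫ θ in (0:ℝ)..Real.pi, F m θ)
        (∫ θ in (0:ℝ)..Real.pi, ∑' m : ℤ, F m θ) :=
      hasSum_intervalIntegral_of_summable_norm hFsum
    have hint : ∀ m : ℤ, (∫ θ in (0:ℝ)..Real.pi, F m θ) =
        if m = n then c n * (Real.pi : ℂ) else 0 := by
      intro m
      have heq : ∀ θ : ℝ, F m θ = c m * Complex.exp (2 * ((m - n : ℤ) : ℂ) * Complex.I * θ) := by
        intro θ
        simp only [hFdef, ContinuousMap.coe_mk]
        rw [mul_assoc, ← Complex.exp_add]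
        congr 2
        push_cast
        ring
      simp_rw [heq]
      rw [intervalIntegral.integral_const_mul, key_integral (m - n)]
      rcases eq_or_ne m n with h | h
      · simp [h]
      · rw [if_neg (sub_ne_zero.mpr h), if_neg h, mul_zero]
    have hHS2 : HasSum (fun m : ℤ => ∫ θ in (0:ℝ)..Real.pi, F m θ) (c n * (Real.pi : ℂ)) := by
      simp_rw [hint]
      exact hasSum_ite_eq n _
    have hval : (∫ θ in (0:ℝ)..Real.pi, ∑' m : ℤ, F m θ) = c n * (Real.pi : ℂ) :=
      hHS.unique hHS2
    have hπ : (Real.pi : ℂ) ≠ 0 := by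
      exact_mod_cast Real.pi_ne_zero
    have heqg : ∀ θ : ℝ, (∑' m : ℤ, F m θ) =
        g θ * Complex.exp (-(2 * (n : ℂ) * Complex.I * (θ : ℂ))) := by
      intro θ
      simp only [hgdef, hFdef, ContinuousMap.coe_mk]
      rw [tsum_mul_right]
    rw [fc]
    simp_rw [← heqg]
    rw [hval]
    field_simp
  refine ⟨g, hgcont, hgper, ?_, fun n => hfc n⟩
  apply Summable.of_nonneg_of_le (fun n => norm_nonneg _) (fun n => ?_) hcsum
  rw [hfc n]

end
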